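/- arXiv:2102.09017 — 4 statements merged into one kernel-verified Lean document; each statement's English description precedes it below -/
import Mathlib

section
/- Let δ > 0 and let F be the CDF of a continuous distribution. Define A(θ) = (∫_θ^∞ u dF) / (δ + ∫_θ^∞ dF) and let ρ be the maximizer of A on [0, ∞). Then A is monotonically nondecreasing on [0, ρ] and monotonically nonincreasing on [ρ, ∞). -/
/-!
Splitting the tail `[θ₁, ∞)` at `θ₂` exhibits `A θ₁` as a mediant of `A θ₂` and of the mean of
`u` over `[θ₁, θ₂)`, which lies in `[θ₁, θ₂]`. Hence `A θ₁ ≤ A θ₂` as soon as `θ₂ ≤ A θ₂`, and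
`A θ₂ ≤ A θ₁` as soon as `A θ₁ ≤ θ₁`. If `A` decreased somewhere on `[0, ρ]`, say at `θ₁ < θ₂`,
then `A θ₂ < θ₂`, so `A` is nonincreasing from `θ₂` on and `A ρ ≤ A θ₂ < A θ₁`, contradicting
maximality of `ρ`; symmetrically on `[ρ, ∞)`.
-/

open MeasureTheory Set

lemma add_div_add_le_div_of_le_div {n d i m t : ℝ} (hd : 0 < d) (hm : 0 ≤ m) (hi : i ≤ t * m)
    (ht : t ≤ n / d) : (n + i) / (d + m) ≤ n / d := by
  rw [le_div_iff₀ hd] at ht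
  rw [div_le_div_iff₀ (by positivity) hd]
  nlinarith [mul_le_mul_of_nonneg_right ht hm]

lemma div_le_add_div_add_of_add_div_add_le {n d i m t : ℝ} (hd : 0 < d) (hm : 0 ≤ m)
    (hi : t * m ≤ i) (ht : (n + i) / (d + m) ≤ t) : n / d ≤ (n + i) / (d + m) := by
  rw [div_le_iff₀ (by positivity)] at ht
  have hn : n ≤ t * d := by linarith
  rw [div_le_div_iff₀ hd (by positivity)]
  nlinarith [mul_le_mul_of_nonneg_right hn hm]

lemma monotoneOn_Icc_antitoneOn_Ici_of_isMaxOn {f : ℝ → ℝ} {ρ : ℝ} (hρ0 : 0 ≤ ρ)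
    (hmax : IsMaxOn f (Ici 0) ρ)
    (hup : ∀ θ₁ θ₂, 0 ≤ θ₁ → θ₁ ≤ θ₂ → θ₂ ≤ f θ₂ → f θ₁ ≤ f θ₂)
    (hdown : ∀ θ₁ θ₂, 0 ≤ θ₁ → θ₁ ≤ θ₂ → f θ₁ ≤ θ₁ → f θ₂ ≤ f θ₁) :
    MonotoneOn f (Icc 0 ρ) ∧ AntitoneOn f (Ici ρ) := by
  constructor
  · intro θ₁ h₁ θ₂ h₂ h12
    rcases le_or_gt θ₂ (f θ₂) with h | h
    · exact hup θ₁ θ₂ h₁.1 h12 h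
    · exact (isMaxOn_iff.1 hmax θ₁ h₁.1).trans (hdown θ₂ ρ h₂.1 h₂.2 h.le)
  · intro θ₁ h₁ θ₂ h₂ h12
    have hθ₁ : 0 ≤ θ₁ := hρ0.trans h₁
    rcases le_or_gt (f θ₁) θ₁ with h | h
    · exact hdown θ₁ θ₂ hθ₁ h12 h
    · exact (isMaxOn_iff.1 hmax θ₂ (hθ₁.trans h12)).trans (hup ρ θ₁ hρ0 h₁ h.le)

section TailRatio

noncomputable def tailRatio (δ : ℝ) (μ : Measure ℝ) (θ : ℝ) : ℝ :=
  (∫ u in Ici θ, u ∂μ) / (δ + μ.real (Ici θ))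

variable {μ : Measure ℝ} {θ₁ θ₂ : ℝ}

lemma setIntegral_Ici_eq_Ico_add_Ici (hint : IntegrableOn (fun u => u) (Ici θ₁) μ)
    (h12 : θ₁ ≤ θ₂) :
    ∫ u in Ici θ₁, u ∂μ = (∫ u in Ici θ₂, u ∂μ) + ∫ u in Ico θ₁ θ₂, u ∂μ := by
  rw [add_comm, ← setIntegral_union ((Iio_disjoint_Ici le_rfl).mono_left Ico_subset_Iio_self)
    measurableSet_Ici (hint.mono_set Ico_subset_Ici_self) (hint.mono_set (Ici_subset_Ici.2 h12)),
    Ico_union_Ici_eq_Ici h12]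

variable [IsFiniteMeasure μ]

lemma measureReal_Ici_eq_Ico_add_Ici (h12 : θ₁ ≤ θ₂) :
    μ.real (Ici θ₁) = μ.real (Ici θ₂) + μ.real (Ico θ₁ θ₂) := by
  rw [add_comm, ← measureReal_union ((Iio_disjoint_Ici le_rfl).mono_left Ico_subset_Iio_self)
    measurableSet_Ici, Ico_union_Ici_eq_Ici h12]

lemma mul_measureReal_Ico_le_setIntegral (hint : IntegrableOn (fun u => u) (Ico θ₁ θ₂) μ) :
    θ₁ * μ.real (Ico θ₁ θ₂) ≤ ∫ u in Ico θ₁ θ₂, u ∂μ :=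
  setIntegral_ge_of_const_le_real measurableSet_Ico (measure_ne_top μ _) (fun _ hu => hu.1) hint

lemma setIntegral_le_mul_measureReal_Ico (hint : IntegrableOn (fun u => u) (Ico θ₁ θ₂) μ) :
    ∫ u in Ico θ₁ θ₂, u ∂μ ≤ θ₂ * μ.real (Ico θ₁ θ₂) := by
  calc ∫ u in Ico θ₁ θ₂, u ∂μ ≤ ∫ _ in Ico θ₁ θ₂, θ₂ ∂μ :=
        setIntegral_mono_on hint (integrableOn_const (measure_ne_top μ _)) measurableSet_Ico
          (fun _ hu => hu.2.le)
    _ = θ₂ * μ.real (Ico θ₁ θ₂) := by rw [setIntegral_const, smul_eq_mul, mul_comm]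

variable {δ : ℝ}

lemma tailRatio_le_of_le_tailRatio (hδ : 0 < δ) (hint : IntegrableOn (fun u => u) (Ici θ₁) μ)
    (h12 : θ₁ ≤ θ₂) (h : θ₂ ≤ tailRatio δ μ θ₂) : tailRatio δ μ θ₁ ≤ tailRatio δ μ θ₂ := by
  unfold tailRatio at *
  rw [setIntegral_Ici_eq_Ico_add_Ici hint h12, measureReal_Ici_eq_Ico_add_Ici h12, ← add_assoc]
  exact add_div_add_le_div_of_le_div (by positivity) measureReal_nonneg
    (setIntegral_le_mul_measureReal_Ico (hint.mono_set Ico_subset_Ici_self)) h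

lemma tailRatio_le_of_tailRatio_le (hδ : 0 < δ) (hint : IntegrableOn (fun u => u) (Ici θ₁) μ)
    (h12 : θ₁ ≤ θ₂) (h : tailRatio δ μ θ₁ ≤ θ₁) : tailRatio δ μ θ₂ ≤ tailRatio δ μ θ₁ := by
  unfold tailRatio at *
  rw [setIntegral_Ici_eq_Ico_add_Ici hint h12, measureReal_Ici_eq_Ico_add_Ici h12,
    ← add_assoc] at h ⊢
  exact div_le_add_div_add_of_add_div_add_le (by positivity) measureReal_nonneg
    (mul_measureReal_Ico_le_setIntegral (hint.mono_set Ico_subset_Ici_self)) h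

end TailRatio

theorem unimodality_of_A_general
    (δ : ℝ) (hδ : 0 < δ)
    (μ : Measure ℝ) [IsProbabilityMeasure μ]
    (hint : Integrable (fun u => max u 0) μ)
    (A : ℝ → ℝ)
    (hA : ∀ θ, A θ = (∫ u in Ici θ, u ∂μ) / (δ + (μ (Ici θ)).toReal))
    (ρ : ℝ) (hρ0 : 0 ≤ ρ)
    (hmax : ∀ θ, 0 ≤ θ → A θ ≤ A ρ) :
    MonotoneOn A (Icc 0 ρ) ∧ AntitoneOn A (Ici ρ) := by
  obtain rfl : A = tailRatio δ μ := funext hA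
  have hint_Ici : ∀ θ, 0 ≤ θ → IntegrableOn (fun u => u) (Ici θ) μ := fun θ hθ =>
    hint.integrableOn.congr_fun (fun u hu => max_eq_left (hθ.trans hu)) measurableSet_Ici
  exact monotoneOn_Icc_antitoneOn_Ici_of_isMaxOn hρ0 (isMaxOn_iff.2 hmax)
    (fun θ₁ _ h₁ h12 => tailRatio_le_of_le_tailRatio hδ (hint_Ici θ₁ h₁) h12)
    (fun θ₁ _ h₁ h12 => tailRatio_le_of_tailRatio_le hδ (hint_Ici θ₁ h₁) h12)

/-- With A(θ) = (∫_θ^∞ u dF)/(δ + ∫_θ^∞ dF) and ρ the maximizer of A over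
[0, ∞), A is monotonically nondecreasing on [0, ρ] and nonincreasing on [ρ, ∞). -/
theorem unimodality_of_A
    (δ : ℝ) (hδ : 0 < δ)
    (μ : Measure ℝ) [IsProbabilityMeasure μ] [NullSingletonClass μ]
    (hint : Integrable (fun u => max u 0) μ)
    (A : ℝ → ℝ)
    (hA : ∀ θ, A θ = (∫ u in Ici θ, u ∂μ) / (δ + (μ (Ici θ)).toReal))
    (ρ : ℝ) (hρ0 : 0 ≤ ρ)
    (hmax : ∀ θ, 0 ≤ θ → A θ ≤ A ρ) :
    MonotoneOn A (Icc 0 ρ) ∧ AntitoneOn A (Ici ρ) :=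
  unimodality_of_A_general δ hδ μ hint A hA ρ hρ0 hmax
end

section
/- Given an edge-weighted forest (an acyclic undirected graph) with nonnegative edge weights, there exists a subgraph that is a vertex-disjoint union of star graphs (trees of radius at most 1) whose total edge weight is at least half the total edge weight of the forest. -/
open Set

/-- A graph is a vertex-disjoint union of stars if there is a set `C` of centers such
that every edge has exactly one endpoint in `C`, and every vertex outside `C` has
degree at most one. -/
def IsStarUnion {V : Type*} (H : SimpleGraph V) : Prop :=
  ∃ C : Set V,
    (∀ a b, H.Adj a b → (a ∈ C ↔ b ∉ C)) ∧
    (∀ v, v ∉ C → ∀ a b, H.Adj v a → H.Adj v b → a = b)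

private lemma not_mem_support_of_dist_lt {V : Type*} [DecidableEq V] {G : SimpleGraph V}
    {r a v : V} {p : G.Walk r a} (hp : p.length = G.dist r a) (hv : G.dist r a < G.dist r v) :
    v ∉ p.support := by
  intro h
  have h1 : G.dist r v ≤ (p.takeUntil v h).length := SimpleGraph.dist_le _
  have h2 := SimpleGraph.Walk.length_takeUntil_le p h
  omega

private lemma unique_parent {V : Type*} [DecidableEq V] {G : SimpleGraph V} (hG : G.IsAcyclic)
    {r v a b : V} (hra : G.Reachable r a) (hrb : G.Reachable r b)
    (hav : G.Adj a v) (hbv : G.Adj b v)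
    (ha : G.dist r a + 1 = G.dist r v) (hb : G.dist r b + 1 = G.dist r v) : a = b := by
  obtain ⟨p, hp, hpl⟩ := hra.exists_path_of_dist
  obtain ⟨q, hq, hql⟩ := hrb.exists_path_of_dist
  have hvp : v ∉ p.support := not_mem_support_of_dist_lt hpl (by omega)
  have hvq : v ∉ q.support := not_mem_support_of_dist_lt hql (by omega)
  have hP : (SimpleGraph.Walk.cons hav.symm p.reverse).IsPath := by
    refine hp.reverse.cons ?_
    rwa [SimpleGraph.Walk.support_reverse, List.mem_reverse]
  have hQ : (SimpleGraph.Walk.cons hbv.symm q.reverse).IsPath := by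
    refine hq.reverse.cons ?_
    rwa [SimpleGraph.Walk.support_reverse, List.mem_reverse]
  have := hG.path_unique ⟨_, hP⟩ ⟨_, hQ⟩
  have hval : (SimpleGraph.Walk.cons hav.symm p.reverse)
      = (SimpleGraph.Walk.cons hbv.symm q.reverse) := congrArg Subtype.val this
  have := congrArg (fun W => SimpleGraph.Walk.getVert W 1) hval
  simpa using this

private lemma adj_dist_ne {V : Type*} [DecidableEq V] {G : SimpleGraph V} (hG : G.IsAcyclic)
    {r a b : V} (hra : G.Reachable r a) (hab : G.Adj a b) :
    G.dist r b = G.dist r a + 1 ∨ G.dist r a = G.dist r b + 1 := by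
  have hrb : G.Reachable r b := hra.trans hab.reachable
  obtain ⟨p, hp, hpl⟩ := hra.exists_path_of_dist
  obtain ⟨q, hq, hql⟩ := hrb.exists_path_of_dist
  have h1 : G.dist r b ≤ G.dist r a + 1 := by
    have := SimpleGraph.dist_le (p.concat hab)
    rwa [SimpleGraph.Walk.length_concat, hpl] at this
  have h2 : G.dist r a ≤ G.dist r b + 1 := by
    have := SimpleGraph.dist_le (q.concat hab.symm)
    rwa [SimpleGraph.Walk.length_concat, hql] at this
  have hne : G.dist r a ≠ G.dist r b := by
    intro heq
    have haq : a ∉ q.support := by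
      intro h
      have h3 : G.dist r a ≤ (q.takeUntil a h).length := SimpleGraph.dist_le _
      have h4 := SimpleGraph.Walk.length_takeUntil_le q h
      have h5 : (q.takeUntil a h).length + (q.dropUntil a h).length = q.length := by
        rw [← SimpleGraph.Walk.length_append, SimpleGraph.Walk.take_spec]
      have h6 : (q.dropUntil a h).length = 0 := by omega
      exact hab.ne (SimpleGraph.Walk.eq_of_length_eq_zero h6)
    have hP : (SimpleGraph.Walk.cons hab (q.reverse)).IsPath := by
      refine hq.reverse.cons ?_
      rwa [SimpleGraph.Walk.support_reverse, List.mem_reverse]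
    have := hG.path_unique ⟨_, hP⟩ ⟨p.reverse, hp.reverse⟩
    have hval : (SimpleGraph.Walk.cons hab (q.reverse)) = p.reverse := congrArg Subtype.val this
    have := congrArg SimpleGraph.Walk.length hval
    simp only [SimpleGraph.Walk.length_cons, SimpleGraph.Walk.length_reverse] at this
    omega
  omega

/-- Every edge-weighted forest with nonnegative weights admits a subgraph
that is a vertex-disjoint union of stars capturing at least half the total edge weight. -/
theorem star_decomposition {V : Type*} [Fintype V]
    (G : SimpleGraph V) (hG : G.IsAcyclic)
    (w : Sym2 V → ℝ) (hw : ∀ e, 0 ≤ w e) :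
    ∃ H : SimpleGraph V, H ≤ G ∧ IsStarUnion H ∧
      (∑ᶠ e ∈ G.edgeSet, w e) ≤ 2 * ∑ᶠ e ∈ H.edgeSet, w e := by
  classical
  set d : V → ℕ := fun v => G.dist (G.connectedComponentMk v).out v with hd
  have hreach : ∀ v, G.Reachable (G.connectedComponentMk v).out v := fun v =>
    SimpleGraph.ConnectedComponent.exact (Quot.out_eq _)
  have hroot : ∀ {a b}, G.Adj a b →
      (G.connectedComponentMk a).out = (G.connectedComponentMk b).out := fun hab =>
    congrArg Quot.out (SimpleGraph.ConnectedComponent.connectedComponentMk_eq_of_adj hab)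
  -- adjacent vertices have depth differing by exactly one
  have hA : ∀ {a b}, G.Adj a b → d b = d a + 1 ∨ d a = d b + 1 := by
    intro a b hab
    have := adj_dist_ne hG (hreach a) hab
    simp only [hd]
    rw [hroot hab]
    rwa [hroot hab] at this
  -- uniqueness of parents
  have hB : ∀ {v a b}, G.Adj a v → G.Adj b v → d v = d a + 1 → d v = d b + 1 → a = b := by
    intro v a b hav hbv ha hb
    have e1 : G.dist (G.connectedComponentMk v).out a = d a := by
      simp only [hd]; rw [hroot hav]
    have e2 : G.dist (G.connectedComponentMk v).out b = d b := by
      simp only [hd]; rw [hroot hbv]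
    refine unique_parent hG (r := (G.connectedComponentMk v).out) ?_ ?_ hav hbv ?_ ?_
    · rw [← hroot hav]; exact hreach a
    · rw [← hroot hbv]; exact hreach b
    · rw [e1]
      have ev : G.dist (G.connectedComponentMk v).out v = d v := by simp only [hd]
      rw [ev]; omega
    · rw [e2]
      have ev : G.dist (G.connectedComponentMk v).out v = d v := by simp only [hd]
      rw [ev]; omega
  -- for a parity predicate `p`, the graph of edges whose parent satisfies `p` is a star union
  have key : ∀ p : ℕ → Prop, (∀ n, p (n + 1) ↔ ¬ p n) →
      (SimpleGraph.fromRel (fun a b => G.Adj a b ∧ p (d a) ∧ d b = d a + 1) ≤ G) ∧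
      IsStarUnion (SimpleGraph.fromRel (fun a b => G.Adj a b ∧ p (d a) ∧ d b = d a + 1)) := by
    intro p hp
    constructor
    · intro a b hab
      rw [SimpleGraph.fromRel_adj] at hab
      rcases hab.2 with ⟨h, _⟩ | ⟨h, _⟩
      exacts [h, h.symm]
    · refine ⟨{v | p (d v)}, ?_, ?_⟩
      · intro a b hab
        rw [SimpleGraph.fromRel_adj] at hab
        simp only [mem_setOf_eq]
        rcases hab.2 with ⟨_, h1, h2⟩ | ⟨_, h1, h2⟩
        · rw [h2, hp]
          exact ⟨fun _ h => h h1, fun _ => h1⟩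
        · rw [h2, hp]
      · intro v hv a b hva hvb
        rw [SimpleGraph.fromRel_adj] at hva hvb
        simp only [mem_setOf_eq] at hv
        have g1 : G.Adj a v ∧ d v = d a + 1 := by
          rcases hva.2 with ⟨h, h1, h2⟩ | ⟨h, h1, h2⟩
          · exact absurd h1 hv
          · exact ⟨h, h2⟩
        have g2 : G.Adj b v ∧ d v = d b + 1 := by
          rcases hvb.2 with ⟨h, h1, h2⟩ | ⟨h, h1, h2⟩
          · exact absurd h1 hv
          · exact ⟨h, h2⟩
        exact hB g1.1 g2.1 g1.2 g2.2
  set HE := SimpleGraph.fromRel (fun a b => G.Adj a b ∧ Even (d a) ∧ d b = d a + 1) with hHE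
  set HO := SimpleGraph.fromRel (fun a b => G.Adj a b ∧ ¬ Even (d a) ∧ d b = d a + 1) with hHO
  have hpE : ∀ n, Even (n + 1) ↔ ¬ Even n := fun n => Nat.even_add_one
  have hpO : ∀ n, ¬ Even (n + 1) ↔ ¬ ¬ Even n := by
    intro n; rw [Nat.even_add_one, not_not]
  have keyE := key Even hpE
  have keyO := key (fun n => ¬ Even n) hpO
  have hcover : G.edgeSet = HE.edgeSet ∪ HO.edgeSet := by
    ext e
    induction e using Sym2.ind with
    | _ a b =>
      simp only [Set.mem_union, SimpleGraph.mem_edgeSet, hHE, hHO, SimpleGraph.fromRel_adj]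
      constructor
      · intro hab
        rcases hA hab with h | h
        · by_cases he : Even (d a)
          · exact Or.inl ⟨hab.ne, Or.inl ⟨hab, he, h⟩⟩
          · exact Or.inr ⟨hab.ne, Or.inl ⟨hab, he, h⟩⟩
        · by_cases he : Even (d b)
          · exact Or.inl ⟨hab.ne, Or.inr ⟨hab.symm, he, h⟩⟩
          · exact Or.inr ⟨hab.ne, Or.inr ⟨hab.symm, he, h⟩⟩
      · rintro (⟨_, ⟨h, _⟩ | ⟨h, _⟩⟩ | ⟨_, ⟨h, _⟩ | ⟨h, _⟩⟩)
        exacts [h, h.symm, h, h.symm]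
  have hdisj : Disjoint HE.edgeSet HO.edgeSet := by
    rw [Set.disjoint_left]
    intro e
    induction e using Sym2.ind with
    | _ a b =>
      intro he ho
      rw [SimpleGraph.mem_edgeSet, hHE, SimpleGraph.fromRel_adj] at he
      rw [SimpleGraph.mem_edgeSet, hHO, SimpleGraph.fromRel_adj] at ho
      rcases he.2 with ⟨_, e1, e2⟩ | ⟨_, e1, e2⟩ <;>
        rcases ho.2 with ⟨_, o1, o2⟩ | ⟨_, o1, o2⟩
      · exact o1 e1
      · omega
      · omega
      · exact o1 e1
  have hsum : (∑ᶠ e ∈ G.edgeSet, w e)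
      = (∑ᶠ e ∈ HE.edgeSet, w e) + ∑ᶠ e ∈ HO.edgeSet, w e := by
    rw [hcover]
    exact finsum_mem_union hdisj (Set.toFinite _) (Set.toFinite _)
  rcases le_total (∑ᶠ e ∈ HO.edgeSet, w e) (∑ᶠ e ∈ HE.edgeSet, w e) with h | h
  · exact ⟨HE, keyE.1, keyE.2, by rw [hsum]; linarith⟩
  · exact ⟨HO, keyO.1, keyO.2, by rw [hsum]; linarith⟩
end

section
/- The factor 1/2 in the star-decomposition lemma is tight: for every n ≥ 1, consider the tree with 2n+1 vertices in which a root has n children and each child has exactly one further child, with all 2n edges having weight 1. Then any subgraph that is a vertex-disjoint union of stars has total edge weight at most n+1, while the tree has total weight 2n. -/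
open Set

/-- The depth-2 spider: root `none`, children `some (i, false)`, grandchildren
`some (i, true)`, with edges root–child and child–grandchild. -/
def Spider (n : ℕ) : SimpleGraph (Option (Fin n × Bool)) :=
  SimpleGraph.fromRel (fun a b => ∃ i : Fin n,
    (a = none ∧ b = some (i, false)) ∨ (a = some (i, false) ∧ b = some (i, true)))

/-!
Every edge of a star union has exactly one endpoint outside the set `C` of centers, and a
non-center has at most one neighbour, so the edges inject into the non-centers that carry an
edge ("leaves"). In the spider, a child `cᵢ` and its grandchild `gᵢ` are never both leaves:
the only neighbour of `gᵢ` is `cᵢ`, which must then be a center. So there are at most `n + 1`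
leaves, the root and one vertex per leg.
-/

section StarUnion

variable {V : Type*} {H : SimpleGraph V} {C : Set V}

def starLeaves (H : SimpleGraph V) (C : Set V) : Set V :=
  {v | v ∉ C ∧ ∃ w, H.Adj v w}

theorem exists_leaf_of_mem_edgeSet (hC : ∀ a b, H.Adj a b → (a ∈ C ↔ b ∉ C))
    {e : Sym2 V} (he : e ∈ H.edgeSet) : ∃ v w, v ∉ C ∧ H.Adj v w ∧ e = s(v, w) := by
  induction e using Sym2.ind with
  | _ a b =>
    by_cases ha : a ∈ C
    · exact ⟨b, a, (hC a b he).mp ha, he.symm, Sym2.eq_swap⟩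
    · exact ⟨a, b, ha, he, rfl⟩

theorem card_edgeSet_le_card_starLeaves [Finite V]
    (hC : ∀ a b, H.Adj a b → (a ∈ C ↔ b ∉ C))
    (hleaf : ∀ v, v ∉ C → ∀ a b, H.Adj v a → H.Adj v b → a = b) :
    Nat.card H.edgeSet ≤ Nat.card (starLeaves H C) := by
  choose leaf nbr hleafC hadj heq using fun e : H.edgeSet => exists_leaf_of_mem_edgeSet hC e.2
  refine Nat.card_le_card_of_injective (fun e => ⟨leaf e, hleafC e, nbr e, hadj e⟩) ?_
  intro e₁ e₂ h
  have hv : leaf e₁ = leaf e₂ := congrArg Subtype.val h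
  have hw : nbr e₁ = nbr e₂ := hleaf _ (hleafC e₁) _ _ (hadj e₁) (hv ▸ hadj e₂)
  exact Subtype.ext (by rw [heq, heq, hv, hw])

end StarUnion

section Spider

variable {n : ℕ}

def spiderEdge (p : Fin n × Bool) : Sym2 (Option (Fin n × Bool)) :=
  s(if p.2 then some (p.1, false) else none, some p)

theorem spider_edgeSet : (Spider n).edgeSet = range spiderEdge := by
  ext e
  induction e using Sym2.ind with
  | _ a b =>
    simp only [Spider, SimpleGraph.mem_edgeSet, SimpleGraph.fromRel_adj, mem_range, spiderEdge]
    grind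

theorem spiderEdge_injective : Function.Injective (spiderEdge (n := n)) := by
  rintro ⟨i, _ | _⟩ ⟨j, _ | _⟩ h <;> simp_all [spiderEdge]

theorem card_edgeSet_spider : Nat.card (Spider n).edgeSet = 2 * n := by
  rw [spider_edgeSet, Nat.card_range_of_injective spiderEdge_injective]
  simp [mul_comm]

theorem eq_child_of_spider_adj_grandchild {i : Fin n} {w : Option (Fin n × Bool)}
    (h : (Spider n).Adj (some (i, true)) w) : w = some (i, false) := by
  simp only [Spider, SimpleGraph.fromRel_adj] at h
  grind

theorem child_mem_of_grandchild_mem_starLeaves {H : SimpleGraph (Option (Fin n × Bool))}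
    {C : Set (Option (Fin n × Bool))} (hle : H ≤ Spider n)
    (hC : ∀ a b, H.Adj a b → (a ∈ C ↔ b ∉ C)) {i : Fin n}
    (hi : some (i, true) ∈ starLeaves H C) : some (i, false) ∈ C := by
  obtain ⟨hiC, w, hw⟩ := hi
  rw [eq_child_of_spider_adj_grandchild (hle hw)] at hw
  by_contra h
  exact hiC ((hC _ _ hw).mpr h)

theorem starLeaves_map_fst_injective {H : SimpleGraph (Option (Fin n × Bool))}
    {C : Set (Option (Fin n × Bool))} (hle : H ≤ Spider n)
    (hC : ∀ a b, H.Adj a b → (a ∈ C ↔ b ∉ C)) :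
    Function.Injective fun v : starLeaves H C => v.1.map Prod.fst := by
  rintro ⟨_ | ⟨i, _ | _⟩, hv⟩ ⟨_ | ⟨j, _ | _⟩, hw⟩ h <;>
    simp only [Option.map_none, Option.map_some, Option.some.injEq, reduceCtorEq] at h <;>
    try subst h
  case some.false.some.true => exact absurd (child_mem_of_grandchild_mem_starLeaves hle hC hw) hv.1
  case some.true.some.false => exact absurd (child_mem_of_grandchild_mem_starLeaves hle hC hv) hw.1
  all_goals rfl

end Spider

theorem star_decomposition_tight_general (n : ℕ) :
    Nat.card (Spider n).edgeSet = 2 * n ∧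
    ∀ H : SimpleGraph (Option (Fin n × Bool)), H ≤ Spider n → IsStarUnion H →
      Nat.card H.edgeSet ≤ n + 1 := by
  refine ⟨card_edgeSet_spider, fun H hle ⟨C, hC, hleaf⟩ => ?_⟩
  calc Nat.card H.edgeSet ≤ Nat.card (starLeaves H C) :=
        card_edgeSet_le_card_starLeaves hC hleaf
    _ ≤ Nat.card (Option (Fin n)) :=
      Nat.card_le_card_of_injective _ (starLeaves_map_fst_injective hle hC)
    _ = n + 1 := by simp

/-- Tightness of the factor 1/2: the spider tree with 2n+1 vertices has
2n unit-weight edges, but any vertex-disjoint union of stars inside it has at most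
n + 1 edges. -/
theorem star_decomposition_tight (n : ℕ) (hn : 1 ≤ n) :
    Nat.card (Spider n).edgeSet = 2 * n ∧
    ∀ H : SimpleGraph (Option (Fin n × Bool)), H ≤ Spider n → IsStarUnion H →
      Nat.card H.edgeSet ≤ n + 1 :=
  star_decomposition_tight_general n
end

section
/- Consider a two-player threshold system where thresholds satisfy the symmetric valuation structure: the set of fixed-point threshold profiles {τ_θ} satisfying τ_θ = (Σ_{θ'} λ_θ(θ') ∫_{max(τ_θ, τ_{θ'})}^∞ u dF_{θθ'}) / (δ + Σ_{θ'} λ_θ(θ') ∫_{max(τ_θ, τ_{θ'})}^∞ dF_{θθ'}) for all θ, is a singleton; i.e., the equilibrium threshold profile is unique. -/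
/-!
Subtracting the threshold inside the integrals turns the fixed-point equation into
`δ * τ θ = ∑ θ', λ θ θ' * ∫_{max (τ θ) (τ θ')}^∞ (u - τ θ) dF`, whose right-hand side is
antitone both in the threshold `τ θ` and in the cut-off `max (τ θ) (τ θ')`.  Given two distinct
fixed points, take a type `θ` where they differ with `m = max (τ θ) (τ' θ)` maximal.  Every
cut-off `max m (τ θ')` is then the same for both profiles, so the larger of `τ θ`, `τ' θ` has
the smaller right-hand side, which contradicts `δ > 0`.
-/

open MeasureTheory Set

namespace ThresholdEquilibrium

section TailIntegral

variable {ν : Measure ℝ} [IsFiniteMeasure ν]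

theorem integrableOn_Ici_of_integrable_max (h : Integrable (fun u => max u 0) ν) (t : ℝ) :
    IntegrableOn (fun u => u) (Ici t) ν := by
  refine Integrable.mono' ((integrable_const |t|).add h.restrict)
    measurable_id.aestronglyMeasurable ?_
  rw [ae_restrict_iff' measurableSet_Ici]
  refine ae_of_all _ fun u (hu : t ≤ u) => ?_
  rw [Pi.add_apply, Real.norm_eq_abs, abs_le]
  constructor <;> linarith [le_max_left u 0, le_max_right u 0, neg_abs_le t, abs_nonneg t]

theorem setIntegral_Ici_sub_const (h : Integrable (fun u => max u 0) ν) (t c : ℝ) :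
    ∫ u in Ici t, (u - c) ∂ν = (∫ u in Ici t, u ∂ν) - c * (ν (Ici t)).toReal := by
  rw [integral_sub (integrableOn_Ici_of_integrable_max h t) (integrableOn_const (by simp)),
    setIntegral_const, smul_eq_mul, mul_comm, measureReal_def]

theorem setIntegral_Ici_sub_le (h : Integrable (fun u => max u 0) ν) {s t c d : ℝ}
    (hst : s ≤ t) (hcd : c ≤ d) (hcs : c ≤ s) :
    ∫ u in Ici t, (u - d) ∂ν ≤ ∫ u in Ici s, (u - c) ∂ν := by
  have hint : ∀ r e : ℝ, IntegrableOn (fun u => u - e) (Ici r) ν := fun r e =>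
    (integrableOn_Ici_of_integrable_max h r).sub (integrableOn_const (by simp))
  calc ∫ u in Ici t, (u - d) ∂ν ≤ ∫ u in Ici t, (u - c) ∂ν :=
        setIntegral_mono (hint t d) (hint t c) fun u => by linarith
    _ ≤ ∫ u in Ici s, (u - c) ∂ν := by
        refine setIntegral_mono_set (hint s c) ?_ (Ici_subset_Ici.2 hst).eventuallyLE
        rw [Filter.EventuallyLE, ae_restrict_iff' measurableSet_Ici]
        exact ae_of_all _ fun u (hu : s ≤ u) => sub_nonneg.2 (hcs.trans hu)

end TailIntegral

section Surplus

variable {T : Type*} [Fintype T] {lam : T → ℝ} {ν : T → Measure ℝ} [∀ θ, IsFiniteMeasure (ν θ)]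

/-- The expected surplus over the threshold `c` of a type meeting type `θ'` at rate `lam θ'`,
when a match forms only if the valuation `u ~ ν θ'` clears both `c` and the partner's threshold
`x θ'`. -/
noncomputable def surplus (lam : T → ℝ) (ν : T → Measure ℝ) (x : T → ℝ) (c : ℝ) : ℝ :=
  ∑ θ', lam θ' * ∫ u in Ici (max c (x θ')), (u - c) ∂(ν θ')

theorem surplus_le_surplus (hlam : ∀ θ, 0 ≤ lam θ)
    (hν : ∀ θ, Integrable (fun u => max u 0) (ν θ)) {x y : T → ℝ} {c d : ℝ} (hcd : c ≤ d)
    (hmax : ∀ θ, max c (x θ) ≤ max d (y θ)) :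
    surplus lam ν y d ≤ surplus lam ν x c :=
  Finset.sum_le_sum fun θ _ => mul_le_mul_of_nonneg_left
    (setIntegral_Ici_sub_le (hν θ) (hmax θ) hcd (le_max_left _ _)) (hlam θ)

theorem mul_eq_surplus_of_eq_div {δ : ℝ} (hδ : 0 < δ) (hlam : ∀ θ, 0 ≤ lam θ)
    (hν : ∀ θ, Integrable (fun u => max u 0) (ν θ)) {x : T → ℝ} {c : ℝ}
    (h : c = (∑ θ', lam θ' * ∫ u in Ici (max c (x θ')), u ∂(ν θ')) /
      (δ + ∑ θ', lam θ' * ((ν θ') (Ici (max c (x θ')))).toReal)) :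
    δ * c = surplus lam ν x c := by
  set N := ∑ θ', lam θ' * ∫ u in Ici (max c (x θ')), u ∂(ν θ')
  set D := ∑ θ', lam θ' * ((ν θ') (Ici (max c (x θ')))).toReal
  have hD : 0 ≤ D := Finset.sum_nonneg fun θ' _ => mul_nonneg (hlam θ') ENNReal.toReal_nonneg
  have hN : c * (δ + D) = N := by
    rw [h]
    exact div_mul_cancel₀ N (by linarith)
  have hS : surplus lam ν x c = N - c * D := by
    simp only [surplus, setIntegral_Ici_sub_const (hν _), N, D, Finset.mul_sum,
      ← Finset.sum_sub_distrib]
    exact Finset.sum_congr rfl fun _ _ => by ring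
  rw [hS]
  linarith

theorem eq_of_mul_eq_surplus {δ : ℝ} (hδ : 0 < δ) (hlam : ∀ θ, 0 ≤ lam θ)
    (hν : ∀ θ, Integrable (fun u => max u 0) (ν θ)) {a b : T → ℝ} {α β : ℝ}
    (hα : δ * α = surplus lam ν a α) (hβ : δ * β = surplus lam ν b β)
    (hmax : ∀ θ, max (max α β) (a θ) = max (max α β) (b θ)) :
    α = β := by
  wlog hβα : β ≤ α generalizing a b α β
  · exact (this hβ hα (fun θ => by rw [max_comm β α, hmax θ]) (le_of_not_ge hβα)).symm
  have hcut : ∀ θ, max β (b θ) ≤ max α (a θ) := fun θ => by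
    have := hmax θ
    rw [max_eq_left hβα] at this
    rw [this]
    exact max_le_max hβα le_rfl
  have : δ * α ≤ δ * β := by
    rw [hα, hβ]
    exact surplus_le_surplus hlam hν hβα hcut
  exact le_antisymm (le_of_mul_le_mul_left this hδ) hβα

end Surplus

theorem exists_max_discrepancy {T : Type*} [Fintype T] {f g : T → ℝ} (h : f ≠ g) :
    ∃ θ, f θ ≠ g θ ∧
      ∀ θ', max (max (f θ) (g θ)) (f θ') = max (max (f θ) (g θ)) (g θ') := by
  obtain ⟨θ₁, hθ₁⟩ := Function.ne_iff.1 h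
  obtain ⟨θ, hθ, hθmax⟩ := Finset.exists_max_image {θ | f θ ≠ g θ}
    (fun θ => max (f θ) (g θ)) ⟨θ₁, by simpa using hθ₁⟩
  refine ⟨θ, by simpa using hθ, fun θ' => ?_⟩
  by_cases hθ' : f θ' = g θ'
  · rw [hθ']
  · have hle := hθmax θ' (by simpa using hθ')
    rw [max_eq_left ((le_max_left _ _).trans hle), max_eq_left ((le_max_right _ _).trans hle)]

end ThresholdEquilibrium

open ThresholdEquilibrium in
theorem equilibrium_threshold_unique_general {T : Type*} [Fintype T]
    (δ : ℝ) (hδ : 0 < δ)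
    (lam : T → T → ℝ) (hlam : ∀ a b, 0 ≤ lam a b)
    (μ : T → T → Measure ℝ)
    [∀ a b, IsProbabilityMeasure (μ a b)]
    (hμint : ∀ a b, Integrable (fun u => max u 0) (μ a b))
    (τ τ' : T → ℝ)
    (hτ : ∀ θ, τ θ =
      (∑ θ', lam θ θ' * ∫ u in Ici (max (τ θ) (τ θ')), u ∂(μ θ θ')) /
      (δ + ∑ θ', lam θ θ' * ((μ θ θ') (Ici (max (τ θ) (τ θ')))).toReal))
    (hτ' : ∀ θ, τ' θ =
      (∑ θ', lam θ θ' * ∫ u in Ici (max (τ' θ) (τ' θ')), u ∂(μ θ θ')) /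
      (δ + ∑ θ', lam θ θ' * ((μ θ θ') (Ici (max (τ' θ) (τ' θ')))).toReal)) :
    τ = τ' := by
  by_contra hne
  obtain ⟨θ, hθ, hmax⟩ := exists_max_discrepancy hne
  exact hθ <| eq_of_mul_eq_surplus hδ (hlam θ) (hμint θ)
    (mul_eq_surplus_of_eq_div hδ (hlam θ) (hμint θ) (hτ θ))
    (mul_eq_surplus_of_eq_div hδ (hlam θ) (hμint θ) (hτ' θ)) hmax

/-- With symmetric valuations (F_{θθ'} = F_{θ'θ}), fixed meeting rates
λ_θ(θ') ≥ 0 and δ > 0, the profile of thresholds satisfying the fixed-point equations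
τ_θ = (Σ_{θ'} λ_θ(θ') ∫_{max(τ_θ,τ_{θ'})}^∞ u dF_{θθ'})
      / (δ + Σ_{θ'} λ_θ(θ') ∫_{max(τ_θ,τ_{θ'})}^∞ dF_{θθ'})
is unique. -/
theorem equilibrium_threshold_unique {T : Type*} [Fintype T]
    (δ : ℝ) (hδ : 0 < δ)
    (lam : T → T → ℝ) (hlam : ∀ a b, 0 ≤ lam a b)
    (μ : T → T → Measure ℝ)
    [∀ a b, IsProbabilityMeasure (μ a b)] [∀ a b, NullSingletonClass (μ a b)]
    (hμint : ∀ a b, Integrable (fun u => max u 0) (μ a b))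
    (hμsymm : ∀ a b, μ a b = μ b a)
    (τ τ' : T → ℝ)
    (hτ : ∀ θ, τ θ =
      (∑ θ', lam θ θ' * ∫ u in Ici (max (τ θ) (τ θ')), u ∂(μ θ θ')) /
      (δ + ∑ θ', lam θ θ' * ((μ θ θ') (Ici (max (τ θ) (τ θ')))).toReal))
    (hτ' : ∀ θ, τ' θ =
      (∑ θ', lam θ θ' * ∫ u in Ici (max (τ' θ) (τ' θ')), u ∂(μ θ θ')) /
      (δ + ∑ θ', lam θ θ' * ((μ θ θ') (Ici (max (τ' θ) (τ' θ')))).toReal)) :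
    τ = τ' :=
  equilibrium_threshold_unique_general δ hδ lam hlam μ hμint τ τ' hτ hτ'
end
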